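/- Let q solve q''(t) = -n²q(t) + i·n·b(t)·q(t) with q(s) = 0, q'(s) = q₁, where b is continuous and bounded by β ≥ 0 on [s,T]. Then |q(t)| ≤ (|q₁|/n)·e^{β(t-s)} for all t ∈ [s,T]. -/

import Mathlib

/-!
The energy `E = n²|q|² + |q'|²` of the unperturbed oscillator satisfies `E' = 2⟪q', q'' + n²q⟫
= 2⟪q', i n b q⟫ ≤ 2 n β |q| |q'| ≤ β E`, so Grönwall gives `E(t) ≤ E(s) e^{β(t-s)} = |q₁|² e^{β(t-s)}`.
Hence `n |q(t)| ≤ √E(t) ≤ |q₁| e^{β(t-s)/2} ≤ |q₁| e^{β(t-s)}`.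
-/

open Real Set
open scoped RealInnerProductSpace

theorem le_mul_exp_of_deriv_right_le_mul {f f' : ℝ → ℝ} {K a b : ℝ}
    (hf : ContinuousOn f (Icc a b))
    (hf' : ∀ x ∈ Ico a b, HasDerivWithinAt f (f' x) (Ici x) x)
    (bound : ∀ x ∈ Ico a b, f' x ≤ K * f x) :
    ∀ x ∈ Icc a b, f x ≤ f a * exp (K * (x - a)) := by
  intro x hx
  rw [← gronwallBound_ε0]
  exact le_gronwallBound_of_liminf_deriv_right_le hf
    (fun x hx _ hr ↦ (hf' x hx).liminf_right_slope_le hr) le_rfl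
    (fun x hx ↦ by simpa using bound x hx) x hx

section Energy

variable {F : Type*} [NormedAddCommGroup F] [InnerProductSpace ℝ F]

noncomputable def oscillatorEnergy (ω : ℝ) (q : ℝ → F) (t : ℝ) : ℝ :=
  ω ^ 2 * ‖q t‖ ^ 2 + ‖deriv q t‖ ^ 2

theorem oscillatorEnergy_nonneg (ω : ℝ) (q : ℝ → F) (t : ℝ) : 0 ≤ oscillatorEnergy ω q t := by
  unfold oscillatorEnergy; positivity

theorem hasDerivAt_oscillatorEnergy (ω : ℝ) {q : ℝ → F} {t : ℝ}
    (hq : DifferentiableAt ℝ q t) (hq' : DifferentiableAt ℝ (deriv q) t) :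
    HasDerivAt (oscillatorEnergy ω q)
      (2 * ⟪deriv q t, deriv (deriv q) t + ω ^ 2 • q t⟫) t := by
  refine ((hq.hasDerivAt.norm_sq.const_mul (ω ^ 2)).add hq'.hasDerivAt.norm_sq).congr_deriv ?_
  rw [inner_add_right, real_inner_smul_right, real_inner_comm]
  ring

/-- AM-GM: `2 |ω| ‖q‖ ‖q'‖ ≤ ω² ‖q‖² + ‖q'‖²`. -/
theorem two_mul_inner_deriv_smul_le_abs_mul_oscillatorEnergy (ω c : ℝ) {q : ℝ → F} {t : ℝ}
    {w : F} (hw : ‖w‖ ≤ ‖q t‖) :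
    2 * ⟪deriv q t, (ω * c) • w⟫ ≤ |c| * oscillatorEnergy ω q t :=
  calc 2 * ⟪deriv q t, (ω * c) • w⟫ ≤ 2 * (‖deriv q t‖ * (|ω * c| * ‖w‖)) := by
        rw [← Real.norm_eq_abs, ← norm_smul]; gcongr; exact real_inner_le_norm _ _
    _ = |c| * (2 * (|ω| * ‖w‖) * ‖deriv q t‖) := by rw [abs_mul]; ring
    _ ≤ |c| * (2 * (|ω| * ‖q t‖) * ‖deriv q t‖) := by gcongr
    _ ≤ |c| * ((|ω| * ‖q t‖) ^ 2 + ‖deriv q t‖ ^ 2) := by gcongr; exact two_mul_le_add_sq _ _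
    _ = |c| * oscillatorEnergy ω q t := by rw [mul_pow, sq_abs, oscillatorEnergy]

theorem norm_le_div_of_oscillatorEnergy_le {ω C : ℝ} {q : ℝ → F} {t : ℝ} (hω : 0 < ω)
    (hC : 0 ≤ C) (h : oscillatorEnergy ω q t ≤ C ^ 2) : ‖q t‖ ≤ C / ω := by
  rw [le_div_iff₀ hω, ← pow_le_pow_iff_left₀ (by positivity) hC two_ne_zero]
  unfold oscillatorEnergy at h
  nlinarith [sq_nonneg ‖deriv q t‖]

end Energy

theorem perturbed_oscillator_bound_general
    (n : ℕ) (hn : 0 < n) (s T : ℝ) (q₁ : ℂ) (β : ℝ)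
    (b : ℝ → ℝ) (hbβ : ∀ τ ∈ Set.Icc s T, |b τ| ≤ β)
    (q : ℝ → ℂ) (hq : ContDiff ℝ 2 q)
    (hode : ∀ t : ℝ, deriv (deriv q) t
      = -(n : ℂ)^2 * q t + Complex.I * (n : ℂ) * (b t : ℂ) * q t)
    (hq0 : q s = 0) (hq1 : deriv q s = q₁) :
    ∀ t ∈ Set.Icc s T, ‖q t‖ ≤ (‖q₁‖ / n) * Real.exp (β * (t - s)) := by
  have hq' : Differentiable ℝ (deriv q) :=
    (hq.iterate_deriv' 1 1).differentiable one_ne_zero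
  have hE (t : ℝ) := hasDerivAt_oscillatorEnergy n (hq.differentiable two_ne_zero t) (hq' t)
  have hforce (t : ℝ) :
      deriv (deriv q) t + (n : ℝ) ^ 2 • q t = ((n : ℝ) * b t) • (Complex.I * q t) := by
    rw [hode t]; push_cast [Complex.real_smul]; ring
  have hgrowth (x : ℝ) (hx : x ∈ Ico s T) :
      2 * ⟪deriv q x, deriv (deriv q) x + (n : ℝ) ^ 2 • q x⟫
        ≤ β * oscillatorEnergy n q x := by
    rw [hforce]
    refine (two_mul_inner_deriv_smul_le_abs_mul_oscillatorEnergy _ _ (by simp)).trans ?_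
    exact mul_le_mul_of_nonneg_right (hbβ x (Ico_subset_Icc_self hx))
      (oscillatorEnergy_nonneg _ _ _)
  intro t ht
  have hβ : 0 ≤ β := (abs_nonneg _).trans (hbβ t ht)
  have hgron := le_mul_exp_of_deriv_right_le_mul
    (fun x _ ↦ (hE x).continuousAt.continuousWithinAt) (fun x _ ↦ (hE x).hasDerivWithinAt)
    hgrowth t ht
  have hexp : 1 ≤ exp (β * (t - s)) := one_le_exp (mul_nonneg hβ (sub_nonneg.2 ht.1))
  rw [div_mul_eq_mul_div]
  refine norm_le_div_of_oscillatorEnergy_le (by positivity) (by positivity) (hgron.trans ?_)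
  simp only [oscillatorEnergy, hq0, hq1, norm_zero]
  nlinarith [sq_nonneg ‖q₁‖]

theorem perturbed_oscillator_bound
    (n : ℕ) (hn : 0 < n) (s T : ℝ) (q₁ : ℂ) (β : ℝ) (hβ : 0 ≤ β)
    (b : ℝ → ℝ) (hb : Continuous b) (hbβ : ∀ τ ∈ Set.Icc s T, |b τ| ≤ β)
    (q : ℝ → ℂ) (hq : ContDiff ℝ 2 q)
    (hode : ∀ t : ℝ, deriv (deriv q) t
      = -(n : ℂ)^2 * q t + Complex.I * (n : ℂ) * (b t : ℂ) * q t)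
    (hq0 : q s = 0) (hq1 : deriv q s = q₁) :
    ∀ t ∈ Set.Icc s T, ‖q t‖ ≤ (‖q₁‖ / n) * Real.exp (β * (t - s)) :=
  perturbed_oscillator_bound_general n hn s T q₁ β b hbβ q hq hode hq0 hq1
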